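/- arXiv:1910.08122 — 9 statements merged into one kernel-verified Lean document; each statement's English description precedes it below -/
import Mathlib

section
/- Let q be a prime and k ≤ n natural numbers. Let M : Fin k → (Fin n → ℤ) × (Fin n → ℤ) be a family of integer symplectic vectors in canonical form (the X-parts restricted to the first k coordinates form the k×k identity matrix). Suppose that for all i, j ∈ Fin k the symplectic product (M i) ⊙ (M j) is divisible by q. Then there exists M' : Fin k → (Fin n → ℤ) × (Fin n → ℤ) such that every entry of M' is congruent modulo q to the corresponding entry of M, and (M' i) ⊙ (M' j) = 0 in ℤ for all i, j ∈ Fin k. (Every qudit stabilizer code can be transformed into a local-dimension-invariant code.) -/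
/-- The symplectic product of two vectors `u v : (Fin n → R) × (Fin n → R)`,
where the first component is the X-part and the second the Z-part. -/
def symp {R : Type*} [CommRing R] {n : ℕ} (u v : (Fin n → R) × (Fin n → R)) : R :=
  ∑ j, (v.2 j * u.1 j - v.1 j * u.2 j)

/-!
Write `s i j = symp (M i) (M j)`: this matrix is alternating and divisible by `q`, hence
`s = q • (c - cᵀ)` with `c` the strict upper triangle of `s / q`. Adding `q • c i` to the Z-part
of `M i`, placed on the first `k` coordinates, leaves `M` unchanged modulo `q`; since the X-parts
there form the identity matrix, it changes `symp (M i) (M j)` by `q * (c j i - c i j)`, which is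
exactly `-s i j`.
-/

open Function

section Symp

variable {R : Type*} [CommRing R] {n : ℕ}

theorem symp_self (u : (Fin n → R) × (Fin n → R)) : symp u u = 0 :=
  Finset.sum_eq_zero fun _ _ => by ring

theorem symp_comm (u v : (Fin n → R) × (Fin n → R)) : symp v u = -symp u v := by
  simp only [symp, ← Finset.sum_neg_distrib]
  exact Finset.sum_congr rfl fun _ _ => by ring

theorem symp_add_snd (u v : (Fin n → R) × (Fin n → R)) (a b : Fin n → R) :
    symp (u.1, u.2 + a) (v.1, v.2 + b) = symp u v + (b ⬝ᵥ u.1 - v.1 ⬝ᵥ a) := by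
  simp only [symp, dotProduct, ← Finset.sum_sub_distrib, ← Finset.sum_add_distrib]
  exact Finset.sum_congr rfl fun _ _ => by simp only [Pi.add_apply]; ring

end Symp

theorem extend_zero_dotProduct {R ι κ : Type*} [CommSemiring R] [Fintype ι] [Fintype κ]
    {e : ι → κ} (he : Injective e) (d : ι → R) (w : κ → R) :
    extend e d 0 ⬝ᵥ w = d ⬝ᵥ (w ∘ e) :=
  (Fintype.sum_of_injective e he _ _
    (fun x hx => by rw [extend_apply' _ _ _ (by simpa using hx), Pi.zero_apply, zero_mul])
    (fun i => by rw [comp_apply, he.extend_apply])).symm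

theorem exists_eq_sub_of_alternating {ι G : Type*} [LinearOrder ι] [AddCommGroup G]
    (A : ι → ι → G) (hdiag : ∀ i, A i i = 0) (hanti : ∀ i j, A j i = -A i j) :
    ∃ c : ι → ι → G, ∀ i j, A i j = c i j - c j i := by
  refine ⟨fun i j => if i < j then A i j else 0, fun i j => ?_⟩
  rcases lt_trichotomy i j with h | rfl | h
  · simp [h, h.not_gt]
  · simp [hdiag]
  · simp [h, h.not_gt, hanti i j]

theorem embedding_theorem_general (q n k : ℕ) (hkn : k ≤ n)
    (M : Fin k → (Fin n → ℤ) × (Fin n → ℤ))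
    (hcanon : ∀ i i' : Fin k, (M i).1 (Fin.castLE hkn i') = if i = i' then 1 else 0)
    (hcomm : ∀ i j : Fin k, (q : ℤ) ∣ symp (M i) (M j)) :
    ∃ M' : Fin k → (Fin n → ℤ) × (Fin n → ℤ),
      (∀ i : Fin k, ∀ j : Fin n,
        (M' i).1 j ≡ (M i).1 j [ZMOD q] ∧ (M' i).2 j ≡ (M i).2 j [ZMOD q]) ∧
      (∀ i j : Fin k, symp (M' i) (M' j) = 0) := by
  obtain ⟨c, hc⟩ := exists_eq_sub_of_alternating (fun i j => symp (M i) (M j) / q)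
    (fun i => by simp [symp_self])
    (fun i j => by simp only [symp_comm (M i), Int.neg_ediv_of_dvd (hcomm i j)])
  set d : Fin k → Fin n → ℤ := fun i => extend (Fin.castLE hkn) (c i) 0
  have hX : ∀ i, (M i).1 ∘ Fin.castLE hkn = Pi.single i 1 := fun i => by
    ext i'
    simp [hcanon, Pi.single_apply, eq_comm]
  have hd : ∀ i j, d j ⬝ᵥ (M i).1 = c j i := fun i j => by
    rw [extend_zero_dotProduct (Fin.castLE_injective hkn), hX, dotProduct_single_one]
  refine ⟨fun i => ((M i).1, (M i).2 + (q : ℤ) • d i), fun i x => ⟨rfl, ?_⟩, fun i j => ?_⟩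
  · exact Int.add_mul_emod_self_left _ _ _
  · rw [symp_add_snd, smul_dotProduct, dotProduct_comm (M j).1, smul_dotProduct, hd, hd,
      ← Int.mul_ediv_cancel' (hcomm i j), hc]
    simp only [smul_eq_mul]
    ring

/-- Every qudit stabilizer code (in canonical form) can be transformed into a
local-dimension-invariant code. -/
theorem embedding_theorem (q n k : ℕ) (hq : q.Prime) (hkn : k ≤ n)
    (M : Fin k → (Fin n → ℤ) × (Fin n → ℤ))
    (hcanon : ∀ i i' : Fin k, (M i).1 (Fin.castLE hkn i') = if i = i' then 1 else 0)
    (hcomm : ∀ i j : Fin k, (q : ℤ) ∣ symp (M i) (M j)) :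
    ∃ M' : Fin k → (Fin n → ℤ) × (Fin n → ℤ),
      (∀ i : Fin k, ∀ j : Fin n,
        (M' i).1 j ≡ (M i).1 j [ZMOD q] ∧ (M' i).2 j ≡ (M i).2 j [ZMOD q]) ∧
      (∀ i j : Fin k, symp (M' i) (M' j) = 0) :=
  embedding_theorem_general q n k hkn M hcanon hcomm
end

section
/- Let M : Fin k → (Fin n → ℤ) × (Fin n → ℤ) satisfy (M i) ⊙ (M j) = 0 in ℤ for all i, j, and let B ≥ 1 be a natural number bounding the absolute value of every entry of M. Let d ≥ 1 be a natural number, and suppose that every nonzero e : (Fin n → ℚ) × (Fin n → ℚ) that is undetectable for M over ℚ (i.e. (M i) ⊙ e = 0 in ℚ for all i, with M viewed over ℚ) has weight at least d. Then for every prime p with p > B^(2(d−1)) · (2(d−1))^(d−1), every nonzero ē : (Fin n → ZMod p) × (Fin n → ZMod p) that is undetectable for the reduction of M modulo p has weight at least d. (For all sufficiently large primes p, the distance of the embedded non-degenerate stabilizer code is at least preserved.) -/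
/-- The weight of a symplectic vector: the number of registers on which it is nonzero. -/
def wt {R : Type*} [Zero R] [DecidableEq R] {n : ℕ} (e : (Fin n → R) × (Fin n → R)) : ℕ :=
  (Finset.univ.filter fun j : Fin n => (e.1 j, e.2 j) ≠ ((0 : R), (0 : R))).card

open Matrix

theorem prod_le_mean_pow_card {ι : Type*} [Fintype ι] [Nonempty ι] (z : ι → ℝ)
    (hz : ∀ i, 0 ≤ z i) :
    ∏ i, z i ≤ ((∑ i, z i) / Fintype.card ι) ^ Fintype.card ι := by
  have hamgm := Real.geom_mean_le_arith_mean Finset.univ (fun _ ↦ 1) z (by simp)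
    (by simp [Fintype.card_pos]) (fun i _ ↦ hz i)
  simp only [Real.rpow_one, Finset.sum_const, Finset.card_univ, nsmul_eq_mul, mul_one,
    one_mul] at hamgm
  calc ∏ i, z i = ((∏ i, z i) ^ ((Fintype.card ι : ℝ)⁻¹)) ^ Fintype.card ι :=
        (Real.rpow_inv_natCast_pow (Finset.prod_nonneg fun i _ ↦ hz i) Fintype.card_ne_zero).symm
    _ ≤ ((∑ i, z i) / Fintype.card ι) ^ Fintype.card ι := by
        gcongr
        exact Real.rpow_nonneg (Finset.prod_nonneg fun i _ ↦ hz i) _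

/-- A weak Hadamard inequality: AM-GM applied to the eigenvalues of `Cᴴ * C`. -/
theorem Matrix.det_sq_le_of_abs_le {ι : Type*} [Fintype ι] [DecidableEq ι]
    (C : Matrix ι ι ℝ) {b : ℝ} (hC : ∀ i j, |C i j| ≤ b) :
    C.det ^ 2 ≤ (Fintype.card ι * b ^ 2) ^ Fintype.card ι := by
  rcases isEmpty_or_nonempty ι with hι | hι
  · simp
  have hG : (Cᴴ * C).PosSemidef := posSemidef_conjTranspose_mul_self C
  have htrace : (Cᴴ * C).trace ≤ Fintype.card ι * (Fintype.card ι * b ^ 2) := by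
    have hsq : ∀ i j, C i j * C i j ≤ b ^ 2 := fun i j ↦ by
      nlinarith [abs_mul_abs_self (C i j), abs_nonneg (C i j), hC i j]
    simpa [trace, mul_apply] using Finset.sum_le_sum fun j (_ : j ∈ Finset.univ) ↦
      Finset.sum_le_sum fun i (_ : i ∈ Finset.univ) ↦ hsq i j
  calc C.det ^ 2 = (Cᴴ * C).det := by rw [det_mul, det_conjTranspose, star_trivial, sq]
    _ = ∏ i, hG.1.eigenvalues i := by simpa using hG.1.det_eq_prod_eigenvalues
    _ ≤ ((∑ i, hG.1.eigenvalues i) / Fintype.card ι) ^ Fintype.card ι :=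
        prod_le_mean_pow_card _ hG.eigenvalues_nonneg
    _ = ((Cᴴ * C).trace / Fintype.card ι) ^ Fintype.card ι := by
        rw [hG.1.trace_eq_sum_eigenvalues]; simp
    _ ≤ (Fintype.card ι * b ^ 2) ^ Fintype.card ι := by
        gcongr
        · exact div_nonneg hG.trace_nonneg (Nat.cast_nonneg _)
        · rw [div_le_iff₀ (by positivity)]; linarith

theorem Matrix.det_sq_le_of_abs_le_int {ι : Type*} [Fintype ι] [DecidableEq ι]
    (C : Matrix ι ι ℤ) {b : ℤ} (hC : ∀ i j, |C i j| ≤ b) :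
    C.det ^ 2 ≤ (Fintype.card ι * b ^ 2) ^ Fintype.card ι := by
  have hreal := (C.map (Int.cast : ℤ → ℝ)).det_sq_le_of_abs_le (b := b) fun i j ↦ by
    simpa [← Int.cast_abs] using hC i j
  rw [← Int.cast_det] at hreal
  exact_mod_cast hreal

theorem Matrix.exists_submatrix_det_ne_zero {K m ι : Type*} [Field K] [Fintype m] [Fintype ι]
    [DecidableEq ι] (A : Matrix m ι K) (hA : ∀ v, A *ᵥ v = 0 → v = 0) :
    ∃ r : ι → m, (A.submatrix r id).det ≠ 0 := by
  have hrank : A.rank = Fintype.card ι := by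
    rw [rank, LinearMap.finrank_range_of_inj (LinearMap.ker_eq_bot.1
      (ker_mulVecLin_eq_bot_iff.2 hA)), Module.finrank_fintype_fun_eq_card]
  obtain ⟨κ, a, ha, hspan, hli⟩ := exists_linearIndependent' K A.row
  have : Fintype κ := Fintype.ofInjective a ha
  have hcard : Fintype.card ι = Fintype.card κ := by
    rw [← hrank, rank_eq_finrank_span_row, ← hspan,
      linearIndependent_iff_card_eq_finrank_span.1 hli, Set.finrank]
  refine ⟨a ∘ Fintype.equivOfCardEq hcard, fun hdet ↦ ?_⟩
  have hrows : LinearIndependent K (A.submatrix (a ∘ Fintype.equivOfCardEq hcard) id).row :=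
    hli.comp _ (Fintype.equivOfCardEq hcard).injective
  exact ((isUnit_iff_isUnit_det _).1 (linearIndependent_rows_iff_isUnit.1 hrows)).ne_zero hdet

theorem Matrix.eq_zero_of_mulVec_zmod_eq_zero {m ι : Type*} [Fintype m] [Fintype ι]
    [DecidableEq ι] (A : Matrix m ι ℤ) {B : ℕ} (hA : ∀ i j, |A i j| ≤ B) {p : ℕ} [Fact p.Prime]
    (hcut : (Fintype.card ι * B ^ 2) ^ Fintype.card ι < p ^ 2)
    (hinj : ∀ v, A.map (Int.cast : ℤ → ℚ) *ᵥ v = 0 → v = 0) :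
    ∀ v, A.map (Int.cast : ℤ → ZMod p) *ᵥ v = 0 → v = 0 := by
  obtain ⟨r, hr⟩ := (A.map (Int.cast : ℤ → ℚ)).exists_submatrix_det_ne_zero hinj
  set D := (A.submatrix r id).det
  have hD : D ≠ 0 := fun hD ↦ hr <| by
    rw [submatrix_map, ← Int.cast_det]
    exact_mod_cast hD
  have hDp : ¬ (p : ℤ) ∣ D := fun hdvd ↦ hD <| Int.eq_zero_of_abs_lt_dvd hdvd <| by
    have hDsq := (A.submatrix r id).det_sq_le_of_abs_le_int (b := B) fun i j ↦ hA (r i) j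
    have hDp : |D| ^ 2 < (p : ℤ) ^ 2 := by
      rw [sq_abs]
      exact_mod_cast hDsq.trans_lt (by exact_mod_cast hcut)
    exact (pow_lt_pow_iff_left₀ (abs_nonneg D) (by positivity) two_ne_zero).1 hDp
  have hunit : IsUnit ((A.map (Int.cast : ℤ → ZMod p)).submatrix r id) := by
    rw [isUnit_iff_isUnit_det, submatrix_map, ← Int.cast_det, isUnit_iff_ne_zero, Ne,
      ZMod.intCast_zmod_eq_zero_iff_dvd]
    exact hDp
  intro v hv
  refine mulVec_injective_iff_isUnit.2 hunit ?_
  rw [mulVec_zero]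
  exact funext fun c ↦ congrFun hv (r c)

section Support

variable {R : Type*} {n : ℕ}

def sympSupport [Zero R] [DecidableEq R] (e : (Fin n → R) × (Fin n → R)) : Finset (Fin n) :=
  Finset.univ.filter fun j ↦ (e.1 j, e.2 j) ≠ (0, 0)

theorem wt_eq_card_sympSupport [Zero R] [DecidableEq R] (e : (Fin n → R) × (Fin n → R)) :
    wt e = (sympSupport e).card :=
  rfl

theorem sympSupport_nonempty [Zero R] [DecidableEq R] {e : (Fin n → R) × (Fin n → R)}
    (he : e ≠ 0) : (sympSupport e).Nonempty := by
  by_contra! h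
  have hzero : ∀ j, e.1 j = 0 ∧ e.2 j = 0 := by
    simpa [sympSupport, Finset.filter_eq_empty_iff] using h
  exact he (Prod.ext (funext fun j ↦ (hzero j).1) (funext fun j ↦ (hzero j).2))

variable [CommRing R] (S : Finset (Fin n))

def sympRow (u : (Fin n → R) × (Fin n → R)) : S ⊕ S → R :=
  Sum.elim (fun j ↦ -u.2 j) (fun j ↦ u.1 j)

def restrictSupport (e : (Fin n → R) × (Fin n → R)) : S ⊕ S → R :=
  Sum.elim (fun j ↦ e.1 j) (fun j ↦ e.2 j)

def extendSupport (y : S ⊕ S → R) : (Fin n → R) × (Fin n → R) :=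
  (fun j ↦ if h : j ∈ S then y (.inl ⟨j, h⟩) else 0,
   fun j ↦ if h : j ∈ S then y (.inr ⟨j, h⟩) else 0)

theorem symp_extendSupport (u : (Fin n → R) × (Fin n → R)) (y : S ⊕ S → R) :
    symp u (extendSupport S y) = sympRow S u ⬝ᵥ y := by
  rw [symp, ← Finset.sum_subset S.subset_univ fun j _ hj ↦ by simp [extendSupport, hj],
    ← Finset.sum_coe_sort S, dotProduct, Fintype.sum_sum_type, ← Finset.sum_add_distrib]
  refine Finset.sum_congr rfl fun j _ ↦ ?_
  simp [extendSupport, sympRow]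
  ring

theorem extendSupport_restrictSupport [DecidableEq R] {e : (Fin n → R) × (Fin n → R)}
    (he : sympSupport e ⊆ S) : extendSupport S (restrictSupport S e) = e := by
  have hout : ∀ j ∉ S, e.1 j = 0 ∧ e.2 j = 0 := fun j hj ↦ by
    simpa [sympSupport] using mt (@he j) hj
  ext j <;> by_cases hj : j ∈ S <;> simp [extendSupport, restrictSupport, hj, hout]

@[simp]
theorem extendSupport_zero : extendSupport S (0 : S ⊕ S → R) = 0 := by
  ext <;> simp [extendSupport]

theorem extendSupport_ne_zero {y : S ⊕ S → R} (hy : y ≠ 0) : extendSupport S y ≠ 0 := by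
  contrapose! hy
  ext (⟨j, hj⟩ | ⟨j, hj⟩)
  · simpa [extendSupport, hj] using congrFun (congrArg Prod.fst hy) j
  · simpa [extendSupport, hj] using congrFun (congrArg Prod.snd hy) j

theorem sympSupport_extendSupport_subset [DecidableEq R] (y : S ⊕ S → R) :
    sympSupport (extendSupport S y) ⊆ S := by
  intro j hj
  by_contra hjS
  simp [sympSupport, extendSupport, hjS] at hj

theorem wt_extendSupport_le [DecidableEq R] (y : S ⊕ S → R) : wt (extendSupport S y) ≤ S.card :=
  Finset.card_le_card (sympSupport_extendSupport_subset S y)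

end Support

def sympMatrix {m : Type*} {n : ℕ} (M : m → (Fin n → ℤ) × (Fin n → ℤ)) (S : Finset (Fin n)) :
    Matrix m (S ⊕ S) ℤ :=
  Matrix.of fun i ↦ sympRow S (M i)

theorem abs_sympMatrix_le {m : Type*} {n : ℕ} {M : m → (Fin n → ℤ) × (Fin n → ℤ)} {B : ℤ}
    (hM : ∀ i j, |(M i).1 j| ≤ B ∧ |(M i).2 j| ≤ B) (S : Finset (Fin n)) (i : m) (c : S ⊕ S) :
    |sympMatrix M S i c| ≤ B := by
  rcases c with ⟨j, _⟩ | ⟨j, _⟩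
  · simpa [sympMatrix, sympRow] using (hM i j).2
  · simpa [sympMatrix, sympRow] using (hM i j).1

theorem mulVec_map_sympMatrix {R m : Type*} [CommRing R] {n : ℕ}
    (M : m → (Fin n → ℤ) × (Fin n → ℤ)) (S : Finset (Fin n)) (y : S ⊕ S → R) (i : m) :
    ((sympMatrix M S).map (Int.cast : ℤ → R) *ᵥ y) i =
      symp (fun j ↦ ((M i).1 j : R), fun j ↦ ((M i).2 j : R)) (extendSupport S y) := by
  rw [symp_extendSupport]
  simp [mulVec, dotProduct, sympMatrix, sympRow]

theorem hadamard_bound_lt_sq {B w d p : ℕ} (hw : 1 ≤ w) (hwd : w ≤ d)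
    (hcut : B ^ (2 * d) * (2 * d) ^ d < p) : (2 * w * B ^ 2) ^ (2 * w) < p ^ 2 := by
  have hmono : B ^ (2 * w) * (2 * w) ^ w ≤ B ^ (2 * d) * (2 * d) ^ d := by
    rcases B.eq_zero_or_pos with rfl | hB
    · simp [zero_pow (by omega : 2 * w ≠ 0)]
    · gcongr ?_ * ?_
      · exact Nat.pow_le_pow_right hB (by omega)
      · calc (2 * w) ^ w ≤ (2 * d) ^ w := by gcongr
          _ ≤ (2 * d) ^ d := Nat.pow_le_pow_right (by omega) hwd
  calc (2 * w * B ^ 2) ^ (2 * w) = (B ^ (2 * w) * (2 * w) ^ w) ^ 2 := by ring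
    _ < p ^ 2 := Nat.pow_lt_pow_left (hmono.trans_lt hcut) two_ne_zero

theorem distance_preserved_general (n k : ℕ) (M : Fin k → (Fin n → ℤ) × (Fin n → ℤ))
    (B : ℕ)
    (hbound : ∀ i : Fin k, ∀ j : Fin n, |(M i).1 j| ≤ (B : ℤ) ∧ |(M i).2 j| ≤ (B : ℤ))
    (d : ℕ)
    (hdist : ∀ e : (Fin n → ℚ) × (Fin n → ℚ), e ≠ 0 →
      (∀ i : Fin k, symp (fun j => ((M i).1 j : ℚ), fun j => ((M i).2 j : ℚ)) e = 0) →
      d ≤ wt e)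
    (p : ℕ) (hp : p.Prime) (hcut : B ^ (2 * (d - 1)) * (2 * (d - 1)) ^ (d - 1) < p) :
    ∀ e : (Fin n → ZMod p) × (Fin n → ZMod p), e ≠ 0 →
      (∀ i : Fin k, symp (fun j => ((M i).1 j : ZMod p), fun j => ((M i).2 j : ZMod p)) e = 0) →
      d ≤ wt e := by
  have : Fact p.Prime := ⟨hp⟩
  intro e he hundetectable
  by_contra! hlow
  set S := sympSupport e
  have hwt : wt e = S.card := wt_eq_card_sympSupport e
  have hS : 1 ≤ S.card := Finset.card_pos.2 (sympSupport_nonempty he)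
  obtain ⟨y, hy, hy0⟩ : ∃ y, (sympMatrix M S).map (Int.cast : ℤ → ℚ) *ᵥ y = 0 ∧ y ≠ 0 := by
    by_contra! hinj
    have hrestrict : restrictSupport S e ≠ 0 := fun h ↦ he <| by
      rw [← extendSupport_restrictSupport S subset_rfl, h, extendSupport_zero]
    refine hrestrict ((sympMatrix M S).eq_zero_of_mulVec_zmod_eq_zero
      (abs_sympMatrix_le hbound S) ?_ hinj _ (funext fun i ↦ ?_))
    · simpa [two_mul] using hadamard_bound_lt_sq hS (by omega) hcut
    · rw [mulVec_map_sympMatrix, extendSupport_restrictSupport S subset_rfl]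
      exact hundetectable i
  have hdist_y := hdist (extendSupport S y) (extendSupport_ne_zero S hy0) fun i ↦ by
    rw [← mulVec_map_sympMatrix, hy, Pi.zero_apply]
  have hwt_y := wt_extendSupport_le S y
  omega

/-- For all primes `p` above the cutoff `B^(2(d-1)) (2(d-1))^(d-1)`, the distance of an
embedded non-degenerate stabilizer code is at least preserved. -/
theorem distance_preserved (n k : ℕ) (M : Fin k → (Fin n → ℤ) × (Fin n → ℤ))
    (hcomm : ∀ i j : Fin k, symp (M i) (M j) = 0)
    (B : ℕ) (hB : 1 ≤ B)
    (hbound : ∀ i : Fin k, ∀ j : Fin n, |(M i).1 j| ≤ (B : ℤ) ∧ |(M i).2 j| ≤ (B : ℤ))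
    (d : ℕ) (hd : 1 ≤ d)
    (hdist : ∀ e : (Fin n → ℚ) × (Fin n → ℚ), e ≠ 0 →
      (∀ i : Fin k, symp (fun j => ((M i).1 j : ℚ), fun j => ((M i).2 j : ℚ)) e = 0) →
      d ≤ wt e)
    (p : ℕ) (hp : p.Prime) (hcut : B ^ (2 * (d - 1)) * (2 * (d - 1)) ^ (d - 1) < p) :
    ∀ e : (Fin n → ZMod p) × (Fin n → ZMod p), e ≠ 0 →
      (∀ i : Fin k, symp (fun j => ((M i).1 j : ZMod p), fun j => ((M i).2 j : ZMod p)) e = 0) →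
      d ≤ wt e :=
  distance_preserved_general n k M B hbound d hdist p hp hcut
end

section
/- Let M : Fin k → (Fin n → ℤ) × (Fin n → ℤ) satisfy (M i) ⊙ (M j) = 0 in ℤ for all i, j, and let B ≥ 1 be a natural number bounding the absolute value of every entry of M. Suppose there exists a nonzero e : (Fin n → ℚ) × (Fin n → ℚ) undetectable for M over ℚ, and let d* be the minimum weight among all nonzero rational undetectable vectors for M. Then for every prime p with p > B^(2(d*−1)) · (2(d*−1))^(d*−1), the minimum weight of a nonzero undetectable vector over ZMod p for the reduction of M modulo p exists and equals d*. (For sufficiently large primes the embedded code attains exactly the integer distance d*, and no further distance improvement is possible.) -/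
/-!
A nonzero vector `f` undetectable mod `p`, supported on a set `S` of `w` registers, is a kernel
vector mod `p` of the `k × 2w` integer matrix formed by the columns of the check matrix over `S`.
If `w < d*`, that matrix has trivial kernel over `ℚ`, hence a nonsingular `2w × 2w` minor, whose
determinant is bounded by `(2w B²)^w < p` and so is not divisible by `p`: the kernel is trivial
mod `p` as well, a contradiction. Conversely, a rational undetectable vector of weight `d*`,
scaled to a primitive integer vector, stays nonzero and undetectable mod `p`, with no larger
support.
-/

open Finset Matrix

theorem Real.prod_le_arith_mean_pow {ι : Type*} (s : Finset ι) (z : ι → ℝ)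
    (hz : ∀ i ∈ s, 0 ≤ z i) : ∏ i ∈ s, z i ≤ ((∑ i ∈ s, z i) / #s) ^ #s := by
  rcases s.eq_empty_or_nonempty with rfl | hs
  · simp
  have amgm := Real.geom_mean_le_arith_mean s (fun _ ↦ 1) z (fun _ _ ↦ zero_le_one)
    (by simpa using hs.card_pos) hz
  simp only [Real.rpow_one, sum_const, nsmul_eq_mul, mul_one, one_mul] at amgm
  calc ∏ i ∈ s, z i = ((∏ i ∈ s, z i) ^ (#s : ℝ)⁻¹) ^ #s :=
        (Real.rpow_inv_natCast_pow (prod_nonneg hz) hs.card_pos.ne').symm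
    _ ≤ ((∑ i ∈ s, z i) / #s) ^ #s := by
        gcongr
        exact Real.rpow_nonneg (prod_nonneg hz) _

theorem exists_int_multiple_gcd_eq_one {ι : Type*} [Fintype ι] {v : ι → ℚ} (hv : v ≠ 0) :
    ∃ (u : ι → ℤ) (a : ℚ), (∀ i, (u i : ℚ) = a * v i) ∧ univ.gcd u = 1 := by
  obtain ⟨b, hb⟩ := IsLocalization.exist_integer_multiples (nonZeroDivisors ℤ) univ v
  choose w hw using fun i ↦ hb i (mem_univ i)
  have hb0 : ((b : ℤ) : ℚ) ≠ 0 := by exact_mod_cast nonZeroDivisors.coe_ne_zero b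
  have hw' : ∀ i, (w i : ℚ) = b * v i := by simpa [Algebra.smul_def] using hw
  obtain ⟨i₀, hi₀⟩ : ∃ i, v i ≠ 0 := by simpa [funext_iff] using hv
  obtain ⟨u, hwu, hu⟩ := extract_gcd w ⟨i₀, mem_univ i₀⟩
  have hG : ((univ.gcd w : ℤ) : ℚ) ≠ 0 := by
    intro hG
    have := hw' i₀
    rw [hwu i₀ (mem_univ i₀), Int.cast_mul, hG, zero_mul] at this
    exact mul_ne_zero hb0 hi₀ this.symm
  refine ⟨u, b / (univ.gcd w : ℤ), fun i ↦ ?_, hu⟩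
  rw [div_mul_eq_mul_div, ← hw', hwu i (mem_univ i), Int.cast_mul, mul_div_cancel_left₀ _ hG]

namespace Matrix

variable {m ι : Type*} [Fintype ι]

theorem mulVec_eq_submatrix_mulVec_of_support {R : Type*} [NonUnitalNonAssocSemiring R]
    (A : Matrix m ι R) (T : Finset ι) {v : ι → R} (hv : ∀ c ∉ T, v c = 0) :
    A *ᵥ v = A.submatrix id ((↑) : T → ι) *ᵥ fun c ↦ v c := by
  ext i
  simp only [mulVec, dotProduct, submatrix_apply, id]
  rw [sum_coe_sort T fun c ↦ A i c * v c]
  exact (sum_subset (subset_univ T) fun c _ hc ↦ by rw [hv c hc, mul_zero]).symm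

theorem exists_zmod_mulVec_eq_zero_of_rat (A : Matrix m ι ℤ) {v : ι → ℚ} (hv0 : v ≠ 0)
    (hv : A.map (Int.cast : ℤ → ℚ) *ᵥ v = 0) (p : ℕ) [Fact p.Prime] :
    ∃ u : ι → ZMod p, u ≠ 0 ∧ A.map (Int.cast : ℤ → ZMod p) *ᵥ u = 0 ∧ ∀ c, v c = 0 → u c = 0 := by
  obtain ⟨u, a, hu, hgcd⟩ := exists_int_multiple_gcd_eq_one hv0
  have hAu : A *ᵥ u = 0 := by
    have hℚ : A.map (Int.cast : ℤ → ℚ) *ᵥ (Int.cast ∘ u) = 0 := by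
      rw [show Int.cast ∘ u = a • v from funext hu, mulVec_smul, hv, smul_zero]
    ext i
    have := (RingHom.map_mulVec (Int.castRingHom ℚ) A u i).trans (congrFun hℚ i)
    simpa using this
  refine ⟨Int.cast ∘ u, fun h ↦ ?_, ?_, fun c hc ↦ ?_⟩
  · have : (p : ℤ) ∣ univ.gcd u :=
      dvd_gcd fun i _ ↦ (ZMod.intCast_zmod_eq_zero_iff_dvd _ _).mp (congrFun h i)
    rw [hgcd] at this
    exact (Fact.out : p.Prime).not_dvd_one (by exact_mod_cast this)
  · ext i
    simpa using (RingHom.map_mulVec (Int.castRingHom (ZMod p)) A u i).symm.trans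
      (congrArg Int.cast (congrFun hAu i))
  · have : (u c : ℚ) = 0 := by rw [hu, hc, mul_zero]
    simp [Int.cast_eq_zero.mp this]

variable [DecidableEq ι]

/-- A weak form of Hadamard's inequality: AM–GM applied to the eigenvalues of `Q * Qᴴ`. -/
theorem det_sq_le_of_abs_le_s3 (Q : Matrix ι ι ℝ) {b : ℝ} (hQ : ∀ i j, |Q i j| ≤ b) :
    Q.det ^ 2 ≤ (Fintype.card ι * b ^ 2) ^ Fintype.card ι := by
  have hG : (Q * Qᴴ).PosSemidef := posSemidef_self_mul_conjTranspose Q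
  have hdet : Q.det ^ 2 = ∏ i, hG.1.eigenvalues i := by
    rw [sq, ← det_transpose Q, ← conjTranspose_eq_transpose_of_trivial, ← det_mul]
    simpa using hG.1.det_eq_prod_eigenvalues
  have htrace : ∑ i, hG.1.eigenvalues i = ∑ i, ∑ j, Q i j ^ 2 := by
    have htr := hG.1.trace_eq_sum_eigenvalues
    simp only [RCLike.ofReal_real_eq_id, id] at htr
    rw [← htr]
    simp [trace, mul_apply, sq]
  have hrow : ∀ i, ∑ j, Q i j ^ 2 ≤ Fintype.card ι * b ^ 2 := fun i ↦ by
    simpa using sum_le_sum fun j (_ : j ∈ univ) ↦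
      sq_le_sq' (abs_le.mp (hQ i j)).1 (abs_le.mp (hQ i j)).2
  calc Q.det ^ 2 = ∏ i, hG.1.eigenvalues i := hdet
    _ ≤ ((∑ i, hG.1.eigenvalues i) / Fintype.card ι) ^ Fintype.card ι :=
        Real.prod_le_arith_mean_pow _ _ fun i _ ↦ hG.eigenvalues_nonneg i
    _ ≤ (Fintype.card ι * b ^ 2) ^ Fintype.card ι := by
        gcongr
        · exact div_nonneg (sum_nonneg fun i _ ↦ hG.eigenvalues_nonneg i) (Nat.cast_nonneg _)
        · rcases isEmpty_or_nonempty ι with hι | hι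
          · simp
          rw [div_le_iff₀ (by exact_mod_cast Fintype.card_pos), htrace]
          simpa [mul_comm] using sum_le_sum fun i (_ : i ∈ univ) ↦ hrow i

theorem exists_submatrix_det_ne_zero_s3 {K : Type*} [Field K] [Finite m] (A : Matrix m ι K)
    (hA : ∀ v, A *ᵥ v = 0 → v = 0) : ∃ r : ι → m, (A.submatrix r id).det ≠ 0 := by
  have hinj : Function.Injective A.mulVecLin :=
    LinearMap.ker_eq_bot.mp (LinearMap.ker_eq_bot'.mpr hA)
  have hspan : Submodule.span K (Set.range A.row) = ⊤ := by
    apply Submodule.eq_top_of_finrank_eq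
    rw [← rank_eq_finrank_span_row, rank, LinearMap.finrank_range_of_inj hinj]
  obtain ⟨κ, a, -, hspan', hli⟩ := exists_linearIndependent' K A.row
  let basis := Module.Basis.mk hli (by rw [hspan', hspan])
  have : Finite κ := Module.Finite.finite_basis basis
  have hcard : Nat.card ι = Nat.card κ := by
    rw [← Module.finrank_eq_nat_card_basis basis, Nat.card_eq_fintype_card,
      Module.finrank_fintype_fun_eq_card]
  obtain ⟨g⟩ : Nonempty (ι ≃ κ) := Finite.card_eq.mp hcard
  refine ⟨a ∘ g, ((isUnit_iff_isUnit_det _).mp ?_).ne_zero⟩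
  exact linearIndependent_rows_iff_isUnit.mp (hli.comp g g.injective)

theorem eq_zero_of_mulVec_map_zmod_eq_zero [Finite m] (A : Matrix m ι ℤ) {B p : ℕ} [Fact p.Prime]
    (hA : ∀ i j, |A i j| ≤ B) (hp : (Fintype.card ι * B ^ 2) ^ Fintype.card ι < p ^ 2)
    (hℚ : ∀ v, A.map (Int.cast : ℤ → ℚ) *ᵥ v = 0 → v = 0)
    {v : ι → ZMod p} (hv : A.map (Int.cast : ℤ → ZMod p) *ᵥ v = 0) : v = 0 := by
  obtain ⟨r, hr⟩ := exists_submatrix_det_ne_zero_s3 _ hℚ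
  set Q := A.submatrix r id
  have hQ : Q.det ≠ 0 := by
    rw [submatrix_map, ← Int.cast_det] at hr
    exact_mod_cast hr
  have hQ_lt : |Q.det| < p := by
    have hadamard := det_sq_le_of_abs_le_s3 (Q.map (Int.cast : ℤ → ℝ)) (b := B) fun i j ↦ by
      simpa [Q, ← Int.cast_abs] using (Int.cast_le (R := ℝ)).mpr (hA (r i) j)
    rw [← Int.cast_det] at hadamard
    have : (Q.det : ℝ) ^ 2 < (p : ℝ) ^ 2 := hadamard.trans_lt (by exact_mod_cast hp)
    exact abs_lt_of_sq_lt_sq (by exact_mod_cast this) (Nat.cast_nonneg p)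
  have hQp : (Q.map (Int.cast : ℤ → ZMod p)).det ≠ 0 := by
    rw [← Int.cast_det, Ne, ZMod.intCast_zmod_eq_zero_iff_dvd]
    exact fun hdvd ↦ hQ (Int.eq_zero_of_abs_lt_dvd hdvd hQ_lt)
  by_contra hv0
  refine hQp (exists_mulVec_eq_zero_iff.mp ⟨v, hv0, ?_⟩)
  ext i
  simpa [mulVec, dotProduct, Q] using congrFun hv (r i)

theorem eq_zero_of_mulVec_map_zmod_eq_zero_of_support [Finite m] (A : Matrix m ι ℤ) (T : Finset ι)
    {B p : ℕ} [Fact p.Prime] (hA : ∀ i j, |A i j| ≤ B) (hp : (#T * B ^ 2) ^ #T < p ^ 2)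
    (hℚ : ∀ v : ι → ℚ, (∀ c ∉ T, v c = 0) → A.map (Int.cast : ℤ → ℚ) *ᵥ v = 0 → v = 0)
    {v : ι → ZMod p} (hvT : ∀ c ∉ T, v c = 0) (hv : A.map (Int.cast : ℤ → ZMod p) *ᵥ v = 0) :
    v = 0 := by
  have hvT' : (fun c : T ↦ v c) = 0 := by
    refine eq_zero_of_mulVec_map_zmod_eq_zero (A.submatrix id ((↑) : T → ι)) (B := B)
      (fun i j ↦ hA i j) (by simpa using hp) (fun w hw ↦ ?_) ?_
    · let w' : ι → ℚ := fun c ↦ if h : c ∈ T then w ⟨c, h⟩ else 0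
      have hw'T : ∀ c ∉ T, w' c = 0 := fun c hc ↦ dif_neg hc
      have hw' : w' = 0 := hℚ w' hw'T <| by
        rw [mulVec_eq_submatrix_mulVec_of_support _ T hw'T]
        simpa [w', submatrix_map] using hw
      ext c
      simpa [w'] using congrFun hw' c
    · rw [← submatrix_map, ← mulVec_eq_submatrix_mulVec_of_support _ T hvT, hv]
  ext c
  by_cases hc : c ∈ T
  · exact congrFun hvT' ⟨c, hc⟩
  · exact hvT c hc

end Matrix

section SymplecticCode

variable {n k : ℕ}

/-- Row `i` is the linear form `symp (M i)` in the coordinates `Sum.elim e.1 e.2`. -/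
def checkMatrix (M : Fin k → (Fin n → ℤ) × (Fin n → ℤ)) : Matrix (Fin k) (Fin n ⊕ Fin n) ℤ :=
  of fun i ↦ Sum.elim (-(M i).2) (M i).1

theorem abs_checkMatrix_le {M : Fin k → (Fin n → ℤ) × (Fin n → ℤ)} {B : ℕ}
    (hM : ∀ i j, |(M i).1 j| ≤ B ∧ |(M i).2 j| ≤ B) (i : Fin k) (c : Fin n ⊕ Fin n) :
    |checkMatrix M i c| ≤ B := by
  cases c <;> simp [checkMatrix, hM]

theorem symp_intCast_eq_zero_iff {R : Type*} [CommRing R] (M : Fin k → (Fin n → ℤ) × (Fin n → ℤ))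
    (e : (Fin n → R) × (Fin n → R)) :
    (∀ i, symp (fun j ↦ ((M i).1 j : R), fun j ↦ ((M i).2 j : R)) e = 0) ↔
      (checkMatrix M).map (Int.cast : ℤ → R) *ᵥ Sum.elim e.1 e.2 = 0 := by
  simp only [funext_iff, symp, checkMatrix, mulVec, dotProduct, Fintype.sum_sum_type, map_apply,
    of_apply, Sum.elim_inl, Sum.elim_inr, Pi.neg_apply, Int.cast_neg, Pi.zero_apply,
    ← sum_add_distrib]
  refine forall_congr' fun i ↦ ?_
  rw [sum_congr rfl fun j _ ↦ show _ = -((M i).2 j : R) * e.1 j + (M i).1 j * e.2 j by ring]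

theorem sumElim_eq_zero_iff {R : Type*} [Zero R] (e : (Fin n → R) × (Fin n → R)) :
    Sum.elim e.1 e.2 = 0 ↔ e = 0 :=
  (Equiv.sumArrowEquivProdArrow _ _ _).symm.injective.eq_iff' Sum.elim_zero_zero

theorem wt_le_card_of_forall_notMem {R : Type*} [Zero R] [DecidableEq R]
    {e : (Fin n → R) × (Fin n → R)} {S : Finset (Fin n)}
    (h : ∀ j ∉ S, e.1 j = 0 ∧ e.2 j = 0) : wt e ≤ #S :=
  card_le_card fun j hj ↦ by
    by_contra hjS
    simp [h j hjS] at hj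

theorem wt_pos {R : Type*} [Zero R] [DecidableEq R] {e : (Fin n → R) × (Fin n → R)}
    (he : e ≠ 0) : 0 < wt e := by
  obtain ⟨c, hc⟩ : ∃ c, Sum.elim e.1 e.2 c ≠ 0 := by
    by_contra! h
    exact he ((sumElim_eq_zero_iff e).mp (funext h))
  refine card_pos.mpr ⟨c.elim id id, ?_⟩
  cases c <;> simp_all

theorem exists_rat_undetectable_of_zmod {M : Fin k → (Fin n → ℤ) × (Fin n → ℤ)} {B p : ℕ}
    [Fact p.Prime] (hM : ∀ i j, |(M i).1 j| ≤ B ∧ |(M i).2 j| ≤ B)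
    {f : (Fin n → ZMod p) × (Fin n → ZMod p)} (hf0 : f ≠ 0)
    (hf : ∀ i, symp (fun j ↦ ((M i).1 j : ZMod p), fun j ↦ ((M i).2 j : ZMod p)) f = 0)
    (hp : (2 * wt f * B ^ 2) ^ (2 * wt f) < p ^ 2) :
    ∃ e : (Fin n → ℚ) × (Fin n → ℚ), e ≠ 0 ∧
      (∀ i, symp (fun j ↦ ((M i).1 j : ℚ), fun j ↦ ((M i).2 j : ℚ)) e = 0) ∧ wt e ≤ wt f := by
  by_contra! h
  let S : Finset (Fin n) := {j | (f.1 j, f.2 j) ≠ (0, 0)}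
  have hS : wt f = #S := rfl
  apply hf0
  rw [← sumElim_eq_zero_iff]
  refine (checkMatrix M).eq_zero_of_mulVec_map_zmod_eq_zero_of_support (S.disjSum S)
    (abs_checkMatrix_le hM) (by rwa [card_disjSum, ← two_mul, ← hS]) (fun v hvT hv ↦ ?_) ?_
    ((symp_intCast_eq_zero_iff M f).mp hf)
  · by_contra hv0
    have hwt : wt (v ∘ Sum.inl, v ∘ Sum.inr) ≤ #S :=
      wt_le_card_of_forall_notMem fun j hj ↦ ⟨hvT _ (by simpa), hvT _ (by simpa)⟩
    refine (h _ ?_ ?_).not_ge (hwt.trans hS.ge)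
    · rwa [Ne, ← sumElim_eq_zero_iff, Sum.elim_comp_inl_inr]
    · rwa [symp_intCast_eq_zero_iff, Sum.elim_comp_inl_inr]
  · rintro (j | j) hj <;> simp_all [S]

theorem exists_zmod_undetectable_of_rat {M : Fin k → (Fin n → ℤ) × (Fin n → ℤ)} (p : ℕ)
    [Fact p.Prime] {e : (Fin n → ℚ) × (Fin n → ℚ)} (he0 : e ≠ 0)
    (he : ∀ i, symp (fun j ↦ ((M i).1 j : ℚ), fun j ↦ ((M i).2 j : ℚ)) e = 0) :
    ∃ f : (Fin n → ZMod p) × (Fin n → ZMod p), f ≠ 0 ∧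
      (∀ i, symp (fun j ↦ ((M i).1 j : ZMod p), fun j ↦ ((M i).2 j : ZMod p)) f = 0) ∧
      wt f ≤ wt e := by
  obtain ⟨u, hu0, hu, hsupp⟩ := (checkMatrix M).exists_zmod_mulVec_eq_zero_of_rat
    (v := Sum.elim e.1 e.2) (by rwa [Ne, sumElim_eq_zero_iff])
    ((symp_intCast_eq_zero_iff M e).mp he) p
  refine ⟨(u ∘ Sum.inl, u ∘ Sum.inr), ?_, ?_, wt_le_card_of_forall_notMem fun j hj ↦ ?_⟩
  · rwa [Ne, ← sumElim_eq_zero_iff, Sum.elim_comp_inl_inr]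
  · rwa [symp_intCast_eq_zero_iff, Sum.elim_comp_inl_inr]
  · simp only [mem_filter, mem_univ, true_and, ne_eq, not_not, Prod.mk.injEq] at hj
    exact ⟨hsupp (Sum.inl j) hj.1, hsupp (Sum.inr j) hj.2⟩

end SymplecticCode

theorem pow_lt_sq_of_cutoff {B m p w : ℕ} (hw0 : 0 < w) (hw : w ≤ m)
    (hcut : B ^ (2 * m) * (2 * m) ^ m < p) : (2 * w * B ^ 2) ^ (2 * w) < p ^ 2 := by
  have hB : B ^ (2 * w) ≤ B ^ (2 * m) := by
    rcases B.eq_zero_or_pos with rfl | hB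
    · simp [zero_pow (by omega : 2 * w ≠ 0)]
    · exact Nat.pow_le_pow_right hB (by omega)
  have hw' : (2 * w) ^ w ≤ (2 * m) ^ m :=
    (Nat.pow_le_pow_left (by omega) w).trans (Nat.pow_le_pow_right (by omega) hw)
  calc (2 * w * B ^ 2) ^ (2 * w) = (B ^ (2 * w) * (2 * w) ^ w) ^ 2 := by ring
    _ ≤ (B ^ (2 * m) * (2 * m) ^ m) ^ 2 := by gcongr
    _ < p ^ 2 := by gcongr

theorem integer_distance_attained_general (n k : ℕ) (M : Fin k → (Fin n → ℤ) × (Fin n → ℤ))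
    (B : ℕ)
    (hbound : ∀ i : Fin k, ∀ j : Fin n, |(M i).1 j| ≤ (B : ℤ) ∧ |(M i).2 j| ≤ (B : ℤ))
    (dstar : ℕ)
    (hdstar : IsLeast {w : ℕ | ∃ e : (Fin n → ℚ) × (Fin n → ℚ), e ≠ 0 ∧
      (∀ i : Fin k, symp (fun j => ((M i).1 j : ℚ), fun j => ((M i).2 j : ℚ)) e = 0) ∧
      wt e = w} dstar)
    (p : ℕ) (hp : p.Prime)
    (hcut : B ^ (2 * (dstar - 1)) * (2 * (dstar - 1)) ^ (dstar - 1) < p) :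
    IsLeast {w : ℕ | ∃ e : (Fin n → ZMod p) × (Fin n → ZMod p), e ≠ 0 ∧
      (∀ i : Fin k, symp (fun j => ((M i).1 j : ZMod p), fun j => ((M i).2 j : ZMod p)) e = 0) ∧
      wt e = w} dstar := by
  have : Fact p.Prime := ⟨hp⟩
  obtain ⟨⟨e, he0, he, rfl⟩, hmin⟩ := hdstar
  have lower : ∀ f : (Fin n → ZMod p) × (Fin n → ZMod p), f ≠ 0 →
      (∀ i, symp (fun j ↦ ((M i).1 j : ZMod p), fun j ↦ ((M i).2 j : ZMod p)) f = 0) →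
      wt e ≤ wt f := by
    intro f hf0 hf
    by_contra! hlt
    obtain ⟨e', he'0, he', hwt⟩ := exists_rat_undetectable_of_zmod hbound hf0 hf
      (pow_lt_sq_of_cutoff (wt_pos hf0) (by omega) hcut)
    exact (hmin ⟨e', he'0, he', rfl⟩).not_gt (hwt.trans_lt hlt)
  obtain ⟨f, hf0, hf, hwt⟩ := exists_zmod_undetectable_of_rat p he0 he
  exact ⟨⟨f, hf0, hf, le_antisymm hwt (lower f hf0 hf)⟩, fun _ ⟨f, hf0, hf, hw⟩ ↦
    hw ▸ lower f hf0 hf⟩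

/-- For primes `p` above the cutoff `B^(2(d*-1)) (2(d*-1))^(d*-1)`, the embedded code
attains exactly the integer distance `d*`; no further improvement from embedding. -/
theorem integer_distance_attained (n k : ℕ) (M : Fin k → (Fin n → ℤ) × (Fin n → ℤ))
    (hcomm : ∀ i j : Fin k, symp (M i) (M j) = 0)
    (B : ℕ) (hB : 1 ≤ B)
    (hbound : ∀ i : Fin k, ∀ j : Fin n, |(M i).1 j| ≤ (B : ℤ) ∧ |(M i).2 j| ≤ (B : ℤ))
    (dstar : ℕ)
    (hdstar : IsLeast {w : ℕ | ∃ e : (Fin n → ℚ) × (Fin n → ℚ), e ≠ 0 ∧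
      (∀ i : Fin k, symp (fun j => ((M i).1 j : ℚ), fun j => ((M i).2 j : ℚ)) e = 0) ∧
      wt e = w} dstar)
    (p : ℕ) (hp : p.Prime)
    (hcut : B ^ (2 * (dstar - 1)) * (2 * (dstar - 1)) ^ (dstar - 1) < p) :
    IsLeast {w : ℕ | ∃ e : (Fin n → ZMod p) × (Fin n → ZMod p), e ≠ 0 ∧
      (∀ i : Fin k, symp (fun j => ((M i).1 j : ZMod p), fun j => ((M i).2 j : ZMod p)) e = 0) ∧
      wt e = w} dstar :=
  integer_distance_attained_general n k M B hbound dstar hdstar p hp hcut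
end

section
/- Let p be a prime and n, k, d natural numbers with d ≥ 1; set t = (d − 1) / 2 (natural-number floor division) and assume t < k. If (p² − 1)^(k − t) < Nat.choose n t, then there is no M : Fin k → (Fin n → ZMod p) × (Fin n → ZMod p) such that every nonzero e : (Fin n → ZMod p) × (Fin n → ZMod p) that is undetectable for M has weight at least d. (For all primes p below the cutoff p** = √(1 + C(n,t)^{1/(k−t)}), a non-degenerate stabilizer code on n qudits with k stabilizer generators cannot have distance d.) -/
/-!
If every nonzero undetectable error has weight at least `d > 2t`, then two distinct errors of
weight at most `t` have distinct syndromes, since their difference is undetectable of weight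
less than `d`. The `C(n,t) (p² - 1)^t` errors of weight exactly `t` therefore inject into the
`p^k` syndromes, and `p^k ≤ (p² - 1)^k ≤ (p² - 1)^(k-t) (p² - 1)^t` contradicts the cutoff.
-/

open Finset

section HammingCount

variable {ι β : Type*} [Fintype ι] [DecidableEq ι] [Fintype β] [DecidableEq β] [Zero β]

theorem card_filter_support_eq (s : Finset ι) :
    #{f : ι → β | ({i | f i ≠ 0} : Finset ι) = s} = (Fintype.card β - 1) ^ #s := by
  have hfilter : ({f : ι → β | ({i | f i ≠ 0} : Finset ι) = s} : Finset (ι → β)) =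
      Fintype.piFinset fun i => if i ∈ s then univ.erase 0 else {0} := by
    ext f
    simp only [mem_filter, mem_univ, true_and, Fintype.mem_piFinset, Finset.ext_iff]
    refine forall_congr' fun i => ?_
    by_cases hi : i ∈ s <;> simp [hi]
  rw [hfilter, Fintype.card_piFinset]
  simp [apply_ite card, prod_ite_mem]

theorem card_filter_hammingNorm_eq (t : ℕ) :
    #{f : ι → β | hammingNorm f = t} = (Fintype.card ι).choose t * (Fintype.card β - 1) ^ t := by
  have hmaps : Set.MapsTo (fun f : ι → β => ({i | f i ≠ 0} : Finset ι))
      ({f | hammingNorm f = t} : Finset (ι → β)) (powersetCard t univ : Finset (Finset ι)) := by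
    intro f hf
    simpa [hammingNorm] using hf
  rw [card_eq_sum_card_fiberwise hmaps, ← card_univ (α := ι), ← card_powersetCard,
    ← smul_eq_mul, ← sum_const]
  refine sum_congr rfl fun s hs => ?_
  have hst : #s = t := (mem_powersetCard.mp hs).2
  rw [← hst, ← card_filter_support_eq, filter_filter]
  refine congrArg card (filter_congr fun f _ => and_iff_right_of_imp fun hf => ?_)
  rw [hammingNorm, hf]

end HammingCount

section Syndrome

variable {R : Type*} [CommRing R] {n k : ℕ}

theorem symp_sub (u e e' : (Fin n → R) × (Fin n → R)) :
    symp u (e - e') = symp u e - symp u e' := by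
  simp only [symp, ← sum_sub_distrib]
  exact sum_congr rfl fun _ _ => by simp only [Prod.fst_sub, Prod.snd_sub, Pi.sub_apply]; ring

theorem wt_sub_le [DecidableEq R] (e e' : (Fin n → R) × (Fin n → R)) :
    wt (e - e') ≤ wt e + wt e' := by
  refine (card_le_card fun j => ?_).trans (card_union_le _ _)
  simp only [mem_filter, mem_union, mem_univ, true_and]
  contrapose!
  simp +contextual [Prod.ext_iff]

def syndrome (M : Fin k → (Fin n → R) × (Fin n → R)) (e : (Fin n → R) × (Fin n → R)) :
    Fin k → R :=
  fun i => symp (M i) e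

theorem syndrome_injOn [DecidableEq R] {M : Fin k → (Fin n → R) × (Fin n → R)} {d t : ℕ}
    (hM : ∀ e, e ≠ 0 → (∀ i, symp (M i) e = 0) → d ≤ wt e) (htd : 2 * t < d) :
    Set.InjOn (syndrome M) {e | wt e ≤ t} := by
  intro e (he : wt e ≤ t) e' (he' : wt e' ≤ t) hee'
  by_contra hne
  have hundet : ∀ i, symp (M i) (e - e') = 0 := fun i => by
    rw [symp_sub, sub_eq_zero]; exact congrFun hee' i
  have hdist : d ≤ wt (e - e') := hM _ (sub_ne_zero.mpr hne) hundet
  have hsub : wt (e - e') ≤ wt e + wt e' := wt_sub_le e e'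
  omega

theorem card_filter_wt_eq [Fintype R] [DecidableEq R] (t : ℕ) :
    #{e : (Fin n → R) × (Fin n → R) | wt e = t} = n.choose t * (Fintype.card R ^ 2 - 1) ^ t := by
  -- `wt e` is the Hamming norm of `e` read as a word of length `n` over the alphabet `R × R`.
  have hwt : ∀ e, e ∈ ({e | wt e = t} : Finset ((Fin n → R) × (Fin n → R))) ↔
      (Equiv.arrowProdEquivProdArrow _ _ _).symm e ∈ ({f | hammingNorm f = t} : Finset _) := by
    intro e
    simp only [mem_filter, mem_univ, true_and]
    rfl
  rw [card_equiv _ hwt, card_filter_hammingNorm_eq, Fintype.card_fin, Fintype.card_prod, sq]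

theorem quantum_hamming_bound [Fintype R] [DecidableEq R]
    {M : Fin k → (Fin n → R) × (Fin n → R)} {d t : ℕ}
    (hM : ∀ e, e ≠ 0 → (∀ i, symp (M i) e = 0) → d ≤ wt e) (htd : 2 * t < d) :
    n.choose t * (Fintype.card R ^ 2 - 1) ^ t ≤ Fintype.card R ^ k := by
  rw [← card_filter_wt_eq, ← Fintype.card_fin k, ← Fintype.card_fun, ← card_univ]
  refine card_le_card_of_injOn (syndrome M) (fun _ _ => mem_univ _) fun e he e' he' => ?_
  simp only [coe_filter, mem_univ, true_and] at he he'
  exact syndrome_injOn hM htd (le_of_eq he) (le_of_eq he')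

end Syndrome

theorem no_code_below_cutoff_general (p n k d : ℕ) (hp : p.Prime) (hd : 1 ≤ d)
    (hcut : (p ^ 2 - 1) ^ (k - (d - 1) / 2) < Nat.choose n ((d - 1) / 2)) :
    ¬ ∃ M : Fin k → (Fin n → ZMod p) × (Fin n → ZMod p),
      ∀ e : (Fin n → ZMod p) × (Fin n → ZMod p), e ≠ 0 →
        (∀ i : Fin k, symp (M i) e = 0) → d ≤ wt e := by
  rintro ⟨M, hM⟩
  have : Fact p.Prime := ⟨hp⟩
  set t := (d - 1) / 2
  have hbound := quantum_hamming_bound (t := t) hM (by omega)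
  rw [ZMod.card] at hbound
  have hp_le : p ≤ p ^ 2 - 1 := Nat.le_sub_one_of_lt (lt_self_pow₀ hp.one_lt one_lt_two)
  have hsplit : (p ^ 2 - 1) ^ k ≤ (p ^ 2 - 1) ^ (k - t) * (p ^ 2 - 1) ^ t := by
    rw [← pow_add]
    exact pow_le_pow_right₀ (hp.one_le.trans hp_le) le_tsub_add
  refine lt_irrefl (n.choose t * (p ^ 2 - 1) ^ t) ?_
  calc n.choose t * (p ^ 2 - 1) ^ t ≤ p ^ k := hbound
    _ ≤ (p ^ 2 - 1) ^ k := Nat.pow_le_pow_left hp_le k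
    _ ≤ (p ^ 2 - 1) ^ (k - t) * (p ^ 2 - 1) ^ t := hsplit
    _ < n.choose t * (p ^ 2 - 1) ^ t :=
      Nat.mul_lt_mul_of_pos_right hcut (pow_pos (hp.pos.trans_le hp_le) t)

/-- Below the cutoff `p** = √(1 + C(n,t)^(1/(k-t)))`, a non-degenerate stabilizer code on
`n` qudits with `k` stabilizer generators cannot have distance `d`. -/
theorem no_code_below_cutoff (p n k d : ℕ) (hp : p.Prime) (hd : 1 ≤ d)
    (ht : (d - 1) / 2 < k)
    (hcut : (p ^ 2 - 1) ^ (k - (d - 1) / 2) < Nat.choose n ((d - 1) / 2)) :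
    ¬ ∃ M : Fin k → (Fin n → ZMod p) × (Fin n → ZMod p),
      ∀ e : (Fin n → ZMod p) × (Fin n → ZMod p), e ≠ 0 →
        (∀ i : Fin k, symp (M i) e = 0) → d ≤ wt e :=
  no_code_below_cutoff_general p n k d hp hd hcut
end

section
/- Let k ≤ n be natural numbers and let M : Fin k → (Fin n → ℤ) × (Fin n → ℤ) be in canonical form (the X-parts restricted to the first k coordinates form the k×k identity matrix) with (M i) ⊙ (M j) = 0 in ℤ for all i, j. Then there exist families x, z : Fin (n − k) → (Fin n → ℤ) × (Fin n → ℤ) such that over ℤ: (x i) ⊙ (M a) = 0 and (z i) ⊙ (M a) = 0 for all i and all a; (x i) ⊙ (x j) = 0 and (z i) ⊙ (z j) = 0 for all i, j; and (x i) ⊙ (z j) = 1 if i = j and 0 otherwise. (Invariant logical operators exist for every invariant stabilizer code.) -/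
open Matrix

section LogicalOperators

variable {R : Type*} [CommRing R] {n : ℕ} {κ : Type*} [Fintype κ]

theorem symp_eq_dotProduct (u v : (Fin n → R) × (Fin n → R)) :
    symp u v = v.2 ⬝ᵥ u.1 - v.1 ⬝ᵥ u.2 :=
  Finset.sum_sub_distrib _ _

theorem dotProduct_sum_smul_single (v : Fin n → R) (φ : κ → Fin n) (c : κ → R) :
    v ⬝ᵥ ∑ b, c b • Pi.single (φ b) 1 = ∑ b, c b * v (φ b) := by
  simp [dotProduct_sum, dotProduct_smul, dotProduct_single, mul_comm]

theorem sum_smul_single_apply_of_notMem_range (φ : κ → Fin n) (c : κ → R) {m : Fin n}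
    (hm : m ∉ Set.range φ) : (∑ b, c b • Pi.single (φ b) (1 : R)) m = 0 := by
  simp only [Finset.sum_apply, Pi.smul_apply, smul_eq_mul]
  exact Finset.sum_eq_zero fun b _ => by
    rw [Pi.single_eq_of_ne (fun h => hm ⟨b, h.symm⟩), mul_zero]

def IsCanonicalForm [DecidableEq κ] (M : κ → (Fin n → R) × (Fin n → R)) (φ : κ → Fin n) :
    Prop :=
  ∀ a b, (M a).1 (φ b) = if a = b then 1 else 0

theorem IsCanonicalForm.sum_mul [DecidableEq κ] {M : κ → (Fin n → R) × (Fin n → R)}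
    {φ : κ → Fin n} (hM : IsCanonicalForm M φ) (c : κ → R) (a : κ) :
    ∑ b, c b * (M a).1 (φ b) = c a := by
  simp [hM a]

variable (M : κ → (Fin n → R) × (Fin n → R)) (φ : κ → Fin n)

def logicalX (m : Fin n) : (Fin n → R) × (Fin n → R) :=
  (Pi.single m 1, ∑ b, (M b).2 m • Pi.single (φ b) 1)

def logicalZ (m : Fin n) : (Fin n → R) × (Fin n → R) :=
  (0, Pi.single m 1 - ∑ b, (M b).1 m • Pi.single (φ b) 1)

variable {M φ}

theorem symp_logicalX_left [DecidableEq κ] (hM : IsCanonicalForm M φ) (m : Fin n) (a : κ) :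
    symp (logicalX M φ m) (M a) = 0 := by
  rw [symp_eq_dotProduct, logicalX, dotProduct_single, dotProduct_sum_smul_single,
    hM.sum_mul, mul_one, sub_self]

theorem symp_logicalZ_left [DecidableEq κ] (hM : IsCanonicalForm M φ) (m : Fin n) (a : κ) :
    symp (logicalZ M φ m) (M a) = 0 := by
  rw [symp_eq_dotProduct, logicalZ, dotProduct_zero, dotProduct_sub, dotProduct_single,
    dotProduct_sum_smul_single, hM.sum_mul, mul_one, sub_self, sub_zero]

theorem symp_logicalX_logicalX {m m' : Fin n} (hm : m ∉ Set.range φ)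
    (hm' : m' ∉ Set.range φ) : symp (logicalX M φ m) (logicalX M φ m') = 0 := by
  simp only [symp_eq_dotProduct, logicalX, dotProduct_single, single_dotProduct, mul_one, one_mul]
  rw [sum_smul_single_apply_of_notMem_range φ _ hm, sum_smul_single_apply_of_notMem_range φ _ hm',
    sub_self]

theorem symp_logicalZ_logicalZ (m m' : Fin n) :
    symp (logicalZ M φ m) (logicalZ M φ m') = 0 := by
  simp [symp_eq_dotProduct, logicalZ]

theorem symp_logicalX_logicalZ {m : Fin n} (hm : m ∉ Set.range φ) (m' : Fin n) :
    symp (logicalX M φ m) (logicalZ M φ m') = if m = m' then 1 else 0 := by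
  rw [symp_eq_dotProduct, logicalX, logicalZ, dotProduct_single, zero_dotProduct, sub_zero,
    mul_one]
  dsimp only
  rw [Pi.sub_apply, sum_smul_single_apply_of_notMem_range φ _ hm, sub_zero, Pi.single_apply]

end LogicalOperators

theorem invariant_logical_operators_general (n k : ℕ) (hkn : k ≤ n)
    (M : Fin k → (Fin n → ℤ) × (Fin n → ℤ))
    (hcanon : ∀ i i' : Fin k, (M i).1 (Fin.castLE hkn i') = if i = i' then 1 else 0) :
    ∃ x z : Fin (n - k) → (Fin n → ℤ) × (Fin n → ℤ),
      (∀ i : Fin (n - k), ∀ a : Fin k, symp (x i) (M a) = 0) ∧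
      (∀ i : Fin (n - k), ∀ a : Fin k, symp (z i) (M a) = 0) ∧
      (∀ i j : Fin (n - k), symp (x i) (x j) = 0) ∧
      (∀ i j : Fin (n - k), symp (z i) (z j) = 0) ∧
      (∀ i j : Fin (n - k), symp (x i) (z j) = if i = j then 1 else 0) := by
  let e : Fin (n - k) → Fin n := fun i => ⟨k + i, by omega⟩
  have he_inj : Function.Injective e := fun i j h => Fin.ext (by simpa [e] using h)
  have he_notMem : ∀ i, e i ∉ Set.range (Fin.castLE hkn) := by
    rintro i ⟨b, hb⟩
    have := congrArg Fin.val hb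
    simp only [Fin.val_castLE, e] at this
    omega
  refine ⟨fun i => logicalX M (Fin.castLE hkn) (e i), fun i => logicalZ M (Fin.castLE hkn) (e i),
    fun i a => symp_logicalX_left hcanon _ a, fun i a => symp_logicalZ_left hcanon _ a,
    fun i j => symp_logicalX_logicalX (he_notMem i) (he_notMem j),
    fun i j => symp_logicalZ_logicalZ _ _, fun i j => ?_⟩
  simp only [symp_logicalX_logicalZ (he_notMem i), he_inj.eq_iff]

/-- Invariant logical operators exist for every invariant stabilizer code in canonical form. -/
theorem invariant_logical_operators (n k : ℕ) (hkn : k ≤ n)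
    (M : Fin k → (Fin n → ℤ) × (Fin n → ℤ))
    (hcanon : ∀ i i' : Fin k, (M i).1 (Fin.castLE hkn i') = if i = i' then 1 else 0)
    (hcomm : ∀ i j : Fin k, symp (M i) (M j) = 0) :
    ∃ x z : Fin (n - k) → (Fin n → ℤ) × (Fin n → ℤ),
      (∀ i : Fin (n - k), ∀ a : Fin k, symp (x i) (M a) = 0) ∧
      (∀ i : Fin (n - k), ∀ a : Fin k, symp (z i) (M a) = 0) ∧
      (∀ i j : Fin (n - k), symp (x i) (x j) = 0) ∧
      (∀ i j : Fin (n - k), symp (z i) (z j) = 0) ∧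
      (∀ i j : Fin (n - k), symp (x i) (z j) = if i = j then 1 else 0) :=
  invariant_logical_operators_general n k hkn M hcanon
end

section
/- Let q be a prime and M : Fin k → (Fin n → ℤ) × (Fin n → ℤ). If every nonzero ē : (Fin n → ZMod q) × (Fin n → ZMod q) that is undetectable for the reduction of M modulo q has weight at least d, then every nonzero e : (Fin n → ℚ) × (Fin n → ℚ) that is undetectable for M over ℚ has weight at least d. (The distance of a code over the integers is at least the distance of the code over q bases: d* ≥ d.) -/
/-!
A nonzero rational error `e` is a nonzero rational multiple of an integer vector `g` whose
entries have gcd `1`. Scaling changes neither undetectability nor the support, so `g` is an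
undetectable integer error of the same weight as `e`. Since the entries of `g` are coprime, its
reduction modulo `q` is nonzero; it is undetectable for the reduction of `M` and its support lies
inside that of `g`, so `d ≤ wt (g mod q) ≤ wt g = wt e`.
-/

theorem exists_intCast_eq_smul_gcd_eq_one {ι : Type*} [Fintype ι] (v : ι → ℚ) (hv : v ≠ 0) :
    ∃ c : ℚ, c ≠ 0 ∧ ∃ w : ι → ℤ, (fun i => (w i : ℚ)) = c • v ∧ Finset.univ.gcd w = 1 := by
  obtain ⟨⟨b, hb⟩, hbv⟩ :=
    IsLocalization.exist_integer_multiples_of_finite (M := nonZeroDivisors ℤ) v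
  choose u hu using hbv
  simp only [algebraMap_int_eq, eq_intCast, zsmul_eq_mul] at hu
  have hb0 : (b : ℚ) ≠ 0 := by exact_mod_cast nonZeroDivisors.ne_zero hb
  obtain ⟨i₀, hi₀⟩ := Function.ne_iff.mp hv
  obtain ⟨w, hw, hgcd⟩ := Finset.extract_gcd u ⟨i₀, Finset.mem_univ _⟩
  set g := Finset.univ.gcd u
  have hg0 : (g : ℚ) ≠ 0 := by
    rw [Int.cast_ne_zero, Ne, Finset.gcd_eq_zero_iff]
    intro h
    exact hi₀ (by simpa [h i₀ (Finset.mem_univ _), hb0] using (hu i₀).symm)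
  refine ⟨b / g, div_ne_zero hb0 hg0, w, funext fun i => ?_, hgcd⟩
  have hi := hu i
  rw [hw i (Finset.mem_univ i), Int.cast_mul] at hi
  simp only [Pi.smul_apply, smul_eq_mul]
  field_simp
  linarith

section

variable {R S : Type*} {n : ℕ}

def mapEntries (φ : R → S) (e : (Fin n → R) × (Fin n → R)) : (Fin n → S) × (Fin n → S) :=
  (fun j => φ (e.1 j), fun j => φ (e.2 j))

theorem symp_mapEntries [CommRing R] [CommRing S] (φ : R →+* S)
    (u v : (Fin n → R) × (Fin n → R)) :
    symp (mapEntries φ u) (mapEntries φ v) = φ (symp u v) := by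
  simp [symp, mapEntries]

theorem symp_mapEntries_intCast [CommRing R] (u v : (Fin n → ℤ) × (Fin n → ℤ)) :
    symp (mapEntries Int.cast u) (mapEntries Int.cast v) = ((symp u v : ℤ) : R) :=
  symp_mapEntries (Int.castRingHom R) u v

theorem symp_smul_right [CommRing R] (c : R) (u v : (Fin n → R) × (Fin n → R)) :
    symp u (c • v) = c * symp u v := by
  simp only [symp, Finset.mul_sum, Prod.smul_fst, Prod.smul_snd, Pi.smul_apply, smul_eq_mul,
    mul_sub, mul_assoc]

section Weight

variable [Zero R] [Zero S] [DecidableEq R] [DecidableEq S]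

theorem wt_mapEntries_le (φ : R → S) (hφ : φ 0 = 0) (e : (Fin n → R) × (Fin n → R)) :
    wt (mapEntries φ e) ≤ wt e := by
  refine Finset.card_le_card (Finset.monotone_filter_right _ fun j _ h => ?_)
  contrapose! h
  simp_all [mapEntries]

theorem wt_mapEntries (φ : R → S) (hφ : ∀ x, φ x = 0 ↔ x = 0) (e : (Fin n → R) × (Fin n → R)) :
    wt (mapEntries φ e) = wt e := by
  simp [wt, mapEntries, hφ]

end Weight

theorem wt_smul [MulZeroClass R] [NoZeroDivisors R] [DecidableEq R] {c : R} (hc : c ≠ 0)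
    (e : (Fin n → R) × (Fin n → R)) : wt (c • e) = wt e :=
  wt_mapEntries (c * ·) (by simp [hc]) e

end

theorem exists_intCast_eq_smul_intCast_zmod_ne_zero {n p : ℕ} (hp : p.Prime)
    (e : (Fin n → ℚ) × (Fin n → ℚ)) (he : e ≠ 0) :
    ∃ c : ℚ, c ≠ 0 ∧ ∃ g : (Fin n → ℤ) × (Fin n → ℤ),
      mapEntries Int.cast g = c • e ∧ mapEntries (Int.cast : ℤ → ZMod p) g ≠ 0 := by
  have hne : Sum.elim e.1 e.2 ≠ 0 := fun h =>
    he (Prod.ext (funext fun j => congrFun h (.inl j)) (funext fun j => congrFun h (.inr j)))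
  obtain ⟨c, hc, w, hw, hgcd⟩ := exists_intCast_eq_smul_gcd_eq_one _ hne
  refine ⟨c, hc, (w ∘ .inl, w ∘ .inr), ?_, fun h => ?_⟩
  · exact Prod.ext (funext fun j => congrFun hw (.inl j)) (funext fun j => congrFun hw (.inr j))
  · have hdvd : ∀ i, (p : ℤ) ∣ w i := by
      rintro (j | j)
      · exact (ZMod.intCast_zmod_eq_zero_iff_dvd _ p).mp (congrFun (congrArg Prod.fst h) j)
      · exact (ZMod.intCast_zmod_eq_zero_iff_dvd _ p).mp (congrFun (congrArg Prod.snd h) j)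
    have hp1 := Finset.dvd_gcd (s := .univ) fun i _ => hdvd i
    rw [hgcd] at hp1
    exact hp.not_dvd_one (by exact_mod_cast hp1)

/-- The distance of a code over the integers is at least the distance of the code
over `q` bases: `d* ≥ d`. -/
theorem integer_distance_ge (q n k d : ℕ) (hq : q.Prime)
    (M : Fin k → (Fin n → ℤ) × (Fin n → ℤ))
    (hdist : ∀ e : (Fin n → ZMod q) × (Fin n → ZMod q), e ≠ 0 →
      (∀ i : Fin k, symp (fun j => ((M i).1 j : ZMod q), fun j => ((M i).2 j : ZMod q)) e = 0) →
      d ≤ wt e) :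
    ∀ e : (Fin n → ℚ) × (Fin n → ℚ), e ≠ 0 →
      (∀ i : Fin k, symp (fun j => ((M i).1 j : ℚ), fun j => ((M i).2 j : ℚ)) e = 0) →
      d ≤ wt e := by
  intro e he hMe
  obtain ⟨c, hc, g, hg, hgq⟩ := exists_intCast_eq_smul_intCast_zmod_ne_zero hq e he
  have hMg (i : Fin k) : symp (M i) g = 0 := by
    have h : ((symp (M i) g : ℤ) : ℚ) = c * symp (mapEntries Int.cast (M i)) e := by
      rw [← symp_smul_right, ← hg, symp_mapEntries_intCast]
    rw [show symp (mapEntries Int.cast (M i)) e = 0 from hMe i, mul_zero] at h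
    exact_mod_cast h
  have hMgq (i : Fin k) :
      symp (mapEntries Int.cast (M i)) (mapEntries (Int.cast : ℤ → ZMod q) g) = 0 := by
    rw [symp_mapEntries_intCast, hMg i, Int.cast_zero]
  calc d ≤ wt (mapEntries (Int.cast : ℤ → ZMod q) g) := hdist _ hgq hMgq
    _ ≤ wt g := wt_mapEntries_le _ Int.cast_zero g
    _ = wt (mapEntries (Int.cast : ℤ → ℚ) g) :=
      (wt_mapEntries _ (fun _ => Int.cast_eq_zero) g).symm
    _ = wt e := by rw [hg, wt_smul hc]
end

section
/- Let s₁ = ((1,0,1,1), (0,1,0,0)) and s₂ = ((0,1,0,0), (1,0,1,−1)) be the integer symplectic vectors on n = 4 registers corresponding to the generators XZXX and ZXZZ^{−1}. Then s₁ ⊙ s₂ = 0 in ℤ, and for every prime p the minimum weight of a nonzero e : (Fin 4 → ZMod p) × (Fin 4 → ZMod p) that is undetectable for the reductions of s₁ and s₂ modulo p equals 2. (The modified generators ⟨XZXX, ZXZZ^{−1}⟩ form an invariant code whose distance remains 2 for every prime number of bases.) -/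
section Symplectic

variable {R : Type*} [CommRing R] {n : ℕ}

theorem symp_eq_of_supported_single {u e : (Fin n → R) × (Fin n → R)} {j : Fin n}
    (he : ∀ k, k ≠ j → e.1 k = 0 ∧ e.2 k = 0) :
    symp u e = e.2 j * u.1 j - e.1 j * u.2 j :=
  Finset.sum_eq_single j (fun k _ hk => by simp [he k hk]) (by simp)

theorem eq_zero_of_wt_le_one [DecidableEq R] {e : (Fin n → R) × (Fin n → R)} {j : Fin n}
    (he : wt e ≤ 1) (hj : (e.1 j, e.2 j) ≠ (0, 0)) :
    ∀ k, k ≠ j → e.1 k = 0 ∧ e.2 k = 0 := by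
  intro k hk
  by_contra hk'
  exact hk (Finset.card_le_one.mp he k (by simpa [Prod.ext_iff] using hk') j (by simpa using hj))

theorem eq_zero_of_local_syndromes_eq_zero {u₁ u₂ v₁ v₂ a b : R}
    (hdet : IsUnit (u₁ * v₂ - u₂ * v₁))
    (hu : b * u₁ - a * u₂ = 0) (hv : b * v₁ - a * v₂ = 0) : a = 0 ∧ b = 0 :=
  ⟨hdet.mul_left_eq_zero.mp (by linear_combination v₁ * hu - u₁ * hv),
   hdet.mul_left_eq_zero.mp (by linear_combination v₂ * hu - u₂ * hv)⟩

theorem two_le_wt_of_symp_eq_zero [DecidableEq R] {u v e : (Fin n → R) × (Fin n → R)}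
    (hdet : ∀ j, IsUnit (u.1 j * v.2 j - u.2 j * v.1 j))
    (he : e ≠ 0) (hu : symp u e = 0) (hv : symp v e = 0) : 2 ≤ wt e := by
  by_contra! hwt
  obtain ⟨j, hj⟩ : ∃ j, (e.1 j, e.2 j) ≠ (0, 0) := by
    by_contra! h
    exact he (Prod.ext (funext fun k => (Prod.ext_iff.mp (h k)).1)
      (funext fun k => (Prod.ext_iff.mp (h k)).2))
  rw [symp_eq_of_supported_single (eq_zero_of_wt_le_one (Nat.lt_succ_iff.mp hwt) hj)] at hu hv
  obtain ⟨h₁, h₂⟩ := eq_zero_of_local_syndromes_eq_zero (hdet j) hu hv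
  exact hj (by rw [h₁, h₂])

end Symplectic

section Modified422

variable (R : Type*) [CommRing R]

abbrev xzxx : (Fin 4 → R) × (Fin 4 → R) :=
  (fun j => ((![1, 0, 1, 1] : Fin 4 → ℤ) j : R),
    fun j => ((![0, 1, 0, 0] : Fin 4 → ℤ) j : R))

abbrev zxzzInv : (Fin 4 → R) × (Fin 4 → R) :=
  (fun j => ((![0, 1, 0, 0] : Fin 4 → ℤ) j : R),
    fun j => ((![1, 0, 1, -1] : Fin 4 → ℤ) j : R))

theorem isUnit_det_xzxx_zxzzInv (j : Fin 4) :
    IsUnit ((xzxx R).1 j * (zxzzInv R).2 j - (xzxx R).2 j * (zxzzInv R).1 j) := by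
  fin_cases j <;> simp

theorem isLeast_wt_undetected_xzxx_zxzzInv [Nontrivial R] [DecidableEq R] :
    IsLeast {w : ℕ | ∃ e : (Fin 4 → R) × (Fin 4 → R), e ≠ 0 ∧
      symp (xzxx R) e = 0 ∧ symp (zxzzInv R) e = 0 ∧ wt e = w} 2 := by
  refine ⟨⟨(0, ![1, 0, -1, 0]), ?_, ?_, ?_, ?_⟩, ?_⟩
  · simp [Prod.ext_iff, funext_iff, Fin.forall_fin_succ]
  · simp [symp, Fin.sum_univ_four]
  · simp [symp, Fin.sum_univ_four]
  · have : (Finset.univ.filter fun j : Fin 4 =>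
        ((0 : Fin 4 → R) j, ![(1 : R), 0, -1, 0] j) ≠ (0, 0)) = {0, 2} := by
      ext j; fin_cases j <;> simp
    rw [wt, this]
    rfl
  · rintro w ⟨e, he, hu, hv, rfl⟩
    exact two_le_wt_of_symp_eq_zero (isUnit_det_xzxx_zxzzInv R) he hu hv

end Modified422

/-- The modified generators `⟨XZXX, ZXZZ⁻¹⟩` form an invariant code whose distance
remains 2 for every prime number of bases. -/
theorem modified_422_invariant :
    symp ((![1, 0, 1, 1], ![0, 1, 0, 0]) : (Fin 4 → ℤ) × (Fin 4 → ℤ))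
      ((![0, 1, 0, 0], ![1, 0, 1, -1]) : (Fin 4 → ℤ) × (Fin 4 → ℤ)) = 0 ∧
    ∀ p : ℕ, p.Prime →
      IsLeast {w : ℕ | ∃ e : (Fin 4 → ZMod p) × (Fin 4 → ZMod p), e ≠ 0 ∧
        symp (fun j => ((![1, 0, 1, 1] : Fin 4 → ℤ) j : ZMod p),
              fun j => ((![0, 1, 0, 0] : Fin 4 → ℤ) j : ZMod p)) e = 0 ∧
        symp (fun j => ((![0, 1, 0, 0] : Fin 4 → ℤ) j : ZMod p),
              fun j => ((![1, 0, 1, -1] : Fin 4 → ℤ) j : ZMod p)) e = 0 ∧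
        wt e = w} 2 := by
  refine ⟨by simp [symp, Fin.sum_univ_four], fun p hp => ?_⟩
  have := Fact.mk hp
  exact isLeast_wt_undetected_xzxx_zxzzInv (ZMod p)
end

section
/- Let r₁ = ((1,0,1,1), (0,3,0,0)) and r₂ = ((0,1,0,0), (1,0,1,1)) be integer symplectic vectors on n = 4 registers. Then r₁ ⊙ r₂ = 0 in ℤ; the reductions of r₁ and r₂ modulo 2 are the generators XZXX and ZXZZ of the [[4,2,2]] code (i.e. ((1,0,1,1),(0,1,0,0)) and ((0,1,0,0),(1,0,1,1)) over ZMod 2); yet there exists a nonzero e : (Fin 4 → ZMod 3) × (Fin 4 → ZMod 3) of weight 1 that is undetectable for the reductions of r₁ and r₂ modulo 3. (An invariant form of the [[4,2,2]] code obtained by the prescribed method can have its distance drop to 1 when used as a qutrit code.) -/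
/-!
Reducing modulo 3 kills the coefficient 3 in the Z-part of `r₁` on register 1, and `r₂` has no
Z-part there either. Hence the single-register X error `a·X₁` pairs to zero with both generators:
it is an undetectable error of weight 1.
-/

section SingleRegister

variable {R : Type*} {n : ℕ}

theorem wt_single_fst [Zero R] [DecidableEq R] (i : Fin n) {a : R} (ha : a ≠ 0) :
    wt ((Pi.single i a, 0) : (Fin n → R) × (Fin n → R)) = 1 := by
  rw [wt, Finset.card_eq_one]
  refine ⟨i, Finset.ext fun j => ?_⟩
  by_cases hj : j = i
  · subst hj
    simp [ha]
  · simp [hj]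

theorem symp_single_fst [CommRing R] (u : (Fin n → R) × (Fin n → R)) (i : Fin n) (a : R) :
    symp u (Pi.single i a, 0) = -(a * u.2 i) := by
  simp [symp, Pi.single_apply]

end SingleRegister

/-- An invariant form of the `[[4,2,2]]` code obtained by the prescribed method can
have its distance drop to 1 when used as a qutrit code. -/
theorem invariant_422_distance_drops :
    symp ((![1, 0, 1, 1], ![0, 3, 0, 0]) : (Fin 4 → ℤ) × (Fin 4 → ℤ))
      ((![0, 1, 0, 0], ![1, 0, 1, 1]) : (Fin 4 → ℤ) × (Fin 4 → ℤ)) = 0 ∧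
    ((fun j => ((![1, 0, 1, 1] : Fin 4 → ℤ) j : ZMod 2)) = ![1, 0, 1, 1] ∧
     (fun j => ((![0, 3, 0, 0] : Fin 4 → ℤ) j : ZMod 2)) = ![0, 1, 0, 0] ∧
     (fun j => ((![0, 1, 0, 0] : Fin 4 → ℤ) j : ZMod 2)) = ![0, 1, 0, 0] ∧
     (fun j => ((![1, 0, 1, 1] : Fin 4 → ℤ) j : ZMod 2)) = ![1, 0, 1, 1]) ∧
    ∃ e : (Fin 4 → ZMod 3) × (Fin 4 → ZMod 3), e ≠ 0 ∧ wt e = 1 ∧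
      symp (fun j => ((![1, 0, 1, 1] : Fin 4 → ℤ) j : ZMod 3),
            fun j => ((![0, 3, 0, 0] : Fin 4 → ℤ) j : ZMod 3)) e = 0 ∧
      symp (fun j => ((![0, 1, 0, 0] : Fin 4 → ℤ) j : ZMod 3),
            fun j => ((![1, 0, 1, 1] : Fin 4 → ℤ) j : ZMod 3)) e = 0 := by
  refine ⟨by simp [symp, Fin.sum_univ_four], by decide,
    ⟨Pi.single 1 1, 0⟩, ?_, wt_single_fst 1 one_ne_zero, ?_, ?_⟩
  · simp [Prod.ext_iff]
  · rw [symp_single_fst]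
    decide
  · rw [symp_single_fst]
    simp
end

section
/- Let n, k, t, p be natural numbers with p ≥ 2 and t ≤ k. If (p² − 1)^(k − t) < Nat.choose n t, then p^k < ∑_{j=0}^{t} (Nat.choose n j) · (p² − 1)^j. (If p is below the cutoff p** = √(1 + C(n,t)^{1/(k−t)}), then the quantum Hamming bound is violated.) -/
/-! Since `p ≤ p² - 1`, it suffices to bound `(p² - 1)^k`, and splitting off `(p² - 1)^t` the cutoff
hypothesis makes `(p² - 1)^k` smaller than the single term `j = t` of the Hamming sum. -/

theorem Nat.le_sq_sub_one {p : ℕ} (hp : 2 ≤ p) : p ≤ p ^ 2 - 1 := by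
  have : 2 * p ≤ p ^ 2 := by nlinarith
  omega

theorem Nat.pow_lt_mul_pow_of_pow_sub_lt {a c k t : ℕ} (ha : 0 < a) (h : a ^ (k - t) < c) :
    a ^ k < c * a ^ t :=
  calc a ^ k ≤ a ^ (k - t + t) := Nat.pow_le_pow_right ha (by omega)
    _ = a ^ (k - t) * a ^ t := pow_add a (k - t) t
    _ < c * a ^ t := Nat.mul_lt_mul_of_pos_right h (Nat.pow_pos ha)

theorem hamming_bound_violated_general (n k t p : ℕ) (hp : 2 ≤ p)
    (hcut : (p ^ 2 - 1) ^ (k - t) < Nat.choose n t) :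
    p ^ k < ∑ j ∈ Finset.range (t + 1), Nat.choose n j * (p ^ 2 - 1) ^ j :=
  calc p ^ k ≤ (p ^ 2 - 1) ^ k := Nat.pow_le_pow_left (Nat.le_sq_sub_one hp) k
    _ < Nat.choose n t * (p ^ 2 - 1) ^ t :=
      Nat.pow_lt_mul_pow_of_pow_sub_lt (by have := Nat.le_sq_sub_one hp; omega) hcut
    _ ≤ ∑ j ∈ Finset.range (t + 1), Nat.choose n j * (p ^ 2 - 1) ^ j :=
      Finset.single_le_sum (f := fun j => Nat.choose n j * (p ^ 2 - 1) ^ j)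
        (fun _ _ => Nat.zero_le _) (Finset.self_mem_range_succ t)

/-- If `p` is below the cutoff `p** = √(1 + C(n,t)^(1/(k-t)))`, then the quantum
Hamming bound is violated. -/
theorem hamming_bound_violated (n k t p : ℕ) (hp : 2 ≤ p) (htk : t ≤ k)
    (hcut : (p ^ 2 - 1) ^ (k - t) < Nat.choose n t) :
    p ^ k < ∑ j ∈ Finset.range (t + 1), Nat.choose n j * (p ^ 2 - 1) ^ j :=
  hamming_bound_violated_general n k t p hp hcut
end
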